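/- arXiv:2011.01995 — 2 statements merged into one kernel-verified Lean document; each statement's English description precedes it below -/
import Mathlib

section
/- For the classical mean-field energy E_G(α) = ω α² − √(Ω²/4 + 4 g² α²) with α ∈ ℝ, ω, Ω, g > 0: if g ≤ g_p := √(ωΩ)/2, then E_G attains its global minimum uniquely at α = 0; if g > g_p, then the global minima are exactly at α = ± α_g with α_g² = (g²/ω²)(1 − (g_p/g)⁴). -/
/-!
Writing `u = √(Ω²/4 + 4g²α²)`, which ranges over `[Ω/2, ∞)`, the energy becomes the
quadratic `ω (u² − Ω²/4) / (4g²) − u` in `u`, whose vertex is at `u = 2g²/ω`. Below the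
critical coupling the vertex lies left of `Ω/2`, so the minimum is at the endpoint `u = Ω/2`,
i.e. `α = 0`; above it the vertex is attained, exactly at `α² = g²/ω² − Ω²/(16g²) = α_g²`.
-/

namespace RabiMeanField

noncomputable def energy (ω Ω g α : ℝ) : ℝ :=
  ω * α ^ 2 - √(Ω ^ 2 / 4 + 4 * g ^ 2 * α ^ 2)

noncomputable def minEnergy (ω Ω g : ℝ) : ℝ := -(g ^ 2 / ω + ω * Ω ^ 2 / (16 * g ^ 2))

lemma energy_zero {Ω : ℝ} (hΩ : 0 ≤ Ω) (ω g : ℝ) : energy ω Ω g 0 = -(Ω / 2) := by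
  rw [energy, show Ω ^ 2 / 4 + 4 * g ^ 2 * 0 ^ 2 = (Ω / 2) ^ 2 by ring,
    Real.sqrt_sq (by positivity)]
  ring

lemma energy_zero_lt {ω Ω g α : ℝ} (hω : 0 < ω) (hΩ : 0 ≤ Ω) (hg : 4 * g ^ 2 ≤ ω * Ω)
    (hα : α ≠ 0) : energy ω Ω g 0 < energy ω Ω g α := by
  have hα2 : 0 < α ^ 2 := by positivity
  have hsqrt : √(Ω ^ 2 / 4 + 4 * g ^ 2 * α ^ 2) < ω * α ^ 2 + Ω / 2 := by
    rw [Real.sqrt_lt' (by positivity)]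
    nlinarith [mul_le_mul_of_nonneg_right hg hα2.le, mul_pos (mul_pos hω hω) (mul_pos hα2 hα2)]
  rw [energy_zero hΩ, energy]
  linarith

lemma energy_eq_sq_add {ω g : ℝ} (hω : ω ≠ 0) (hg : g ≠ 0) (Ω α : ℝ) :
    energy ω Ω g α = ω / (4 * g ^ 2) * (√(Ω ^ 2 / 4 + 4 * g ^ 2 * α ^ 2) - 2 * g ^ 2 / ω) ^ 2
      + minEnergy ω Ω g := by
  have hu2 := Real.sq_sqrt (show 0 ≤ Ω ^ 2 / 4 + 4 * g ^ 2 * α ^ 2 by positivity)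
  rw [energy, minEnergy]
  generalize √(Ω ^ 2 / 4 + 4 * g ^ 2 * α ^ 2) = u at hu2 ⊢
  field_simp
  linear_combination (-(16 * ω ^ 2)) * hu2

lemma energy_ge {ω g : ℝ} (hω : 0 < ω) (hg : g ≠ 0) (Ω α : ℝ) :
    minEnergy ω Ω g ≤ energy ω Ω g α := by
  rw [energy_eq_sq_add hω.ne' hg]
  exact le_add_of_nonneg_left (by positivity)

lemma energy_eq_min_iff {ω g : ℝ} (hω : 0 < ω) (hg : g ≠ 0) (Ω α : ℝ) :
    energy ω Ω g α = minEnergy ω Ω g ↔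
      α ^ 2 = g ^ 2 / ω ^ 2 - Ω ^ 2 / (16 * g ^ 2) := by
  have hω4g : 0 < ω / (4 * g ^ 2) := by positivity
  rw [energy_eq_sq_add hω.ne' hg, add_eq_right, mul_eq_zero, or_iff_right hω4g.ne',
    sq_eq_zero_iff, sub_eq_zero, Real.sqrt_eq_iff_eq_sq (by positivity) (by positivity)]
  constructor <;> intro h
  · field_simp at h ⊢
    linear_combination h
  · rw [h]
    field_simp
    ring

end RabiMeanField

open RabiMeanField in
/-- Mean-field minimization of the Rabi ground-state energy
`E_G(α) = ω α² − √(Ω²/4 + 4 g² α²)`: for `g ≤ g_p = √(ωΩ)/2` the unique global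
minimum is at `α = 0`; for `g > g_p` the global minima are exactly `α = ± α_g`
with `α_g² = (g²/ω²)(1 − (g_p/g)⁴)`. -/
theorem stmt_3 (ω Ω g : ℝ) (hω : 0 < ω) (hΩ : 0 < Ω) (hg : 0 < g) :
    let gp : ℝ := Real.sqrt (ω * Ω) / 2
    let E : ℝ → ℝ := fun α => ω * α ^ 2 - Real.sqrt (Ω ^ 2 / 4 + 4 * g ^ 2 * α ^ 2)
    let αg : ℝ := Real.sqrt (g ^ 2 / ω ^ 2 * (1 - (gp / g) ^ 4))
    (g ≤ gp → ∀ α : ℝ, α ≠ 0 → E 0 < E α) ∧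
    (gp < g →
      (∀ α : ℝ, E αg ≤ E α) ∧
      (∀ α : ℝ, E α = E αg → α = αg ∨ α = -αg)) := by
  intro gp E αg
  have hgp : gp ^ 2 = ω * Ω / 4 := by
    rw [div_pow, Real.sq_sqrt (by positivity)]
    ring
  refine ⟨fun hle α hα => energy_zero_lt hω hΩ.le ?_ hα, fun hlt => ?_⟩
  · nlinarith [pow_le_pow_left₀ hg.le hle 2]
  have hαg : αg ^ 2 = g ^ 2 / ω ^ 2 - Ω ^ 2 / (16 * g ^ 2) := by
    have hgp4 : (gp / g) ^ 4 = (ω * Ω / 4) ^ 2 / g ^ 4 := by rw [← hgp]; ring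
    rw [Real.sq_sqrt, hgp4]
    · field_simp
      ring
    · exact mul_nonneg (by positivity)
        (sub_nonneg.2 (pow_le_one₀ (by positivity) ((div_le_one hg).2 hlt.le)))
  have hEαg : E αg = minEnergy ω Ω g := (energy_eq_min_iff hω hg.ne' Ω αg).2 hαg
  refine ⟨fun α => hEαg ▸ energy_ge hω hg.ne' Ω α, fun α hα => ?_⟩
  have hα2 := (energy_eq_min_iff hω hg.ne' Ω α).1 (hα.trans hEαg)
  exact sq_eq_sq_iff_eq_or_eq_neg.1 (hα2.trans hαg.symm)
end

section
/- For a squeezed vacuum state with photon-number probabilities p(2m; ξ) = tanh(ξ)^{2m}/cosh(ξ) · (2m)!/(4^m (m!)²) and p(2m+1; ξ) = 0, the classical Fisher information of photon-number measurement with respect to ξ equals 2, i.e., Σ_m p(2m;ξ)^{-1} (∂_ξ p(2m;ξ))² = 2 for ξ > 0. -/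
/-!
Put `x = tanh² ξ` and `a m = C(2m, m) / 4^m`, the coefficients of the binomial series of
`(1 - x)^(-1/2)`. Then `p(2m; ξ) = a m x^m / cosh ξ`, and its logarithmic derivative is
`(2m - sinh² ξ) / (sinh ξ cosh ξ)`, so the Fisher information is the variance of the photon
number `2m` divided by `sinh² ξ cosh² ξ`. The recurrence `2(m+1) a (m+1) = (2m+1) a m` expresses
`∑ m^(k+1) a m x^m` through the lower moments, which gives mean `sinh² ξ` and variance
`2 sinh² ξ cosh² ξ`.
-/

open Real

noncomputable def invSqrtCoeff (m : ℕ) : ℝ :=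
  ((2 * m).factorial : ℝ) / (4 ^ m * (m.factorial : ℝ) ^ 2)

lemma invSqrtCoeff_zero : invSqrtCoeff 0 = 1 := by simp [invSqrtCoeff]

lemma invSqrtCoeff_pos (m : ℕ) : 0 < invSqrtCoeff m := by unfold invSqrtCoeff; positivity

lemma invSqrtCoeff_succ (m : ℕ) :
    (2 * m + 2) * invSqrtCoeff (m + 1) = (2 * m + 1) * invSqrtCoeff m := by
  simp only [invSqrtCoeff, show 2 * (m + 1) = 2 * m + 1 + 1 by ring, Nat.factorial_succ]
  push_cast
  field_simp
  ring

lemma invSqrtCoeff_le_one (m : ℕ) : invSqrtCoeff m ≤ 1 := by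
  induction m with
  | zero => rw [invSqrtCoeff_zero]
  | succ m ih => nlinarith [invSqrtCoeff_succ m, invSqrtCoeff_pos m]

lemma Ring.succ_mul_multichoose_succ {K : Type*} [CommRing K] [IsDomain K] [CharZero K]
    [BinomialRing K] (r : K) (m : ℕ) :
    (m + 1) * Ring.multichoose r (m + 1) = (r + m) * Ring.multichoose r m := by
  have key : ∀ n : ℕ, (n.factorial : K) * Ring.multichoose r n = (ascPochhammer K n).eval r :=
    fun n => by
      rw [← nsmul_eq_mul, Ring.factorial_nsmul_multichoose_eq_ascPochhammer,
        Polynomial.ascPochhammer_smeval_eq_eval]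
  apply mul_left_cancel₀ (Nat.cast_ne_zero.2 m.factorial_ne_zero : (m.factorial : K) ≠ 0)
  have h := key (m + 1)
  rw [ascPochhammer_succ_eval, ← key m, Nat.factorial_succ] at h
  push_cast at h
  linear_combination h

lemma invSqrtCoeff_eq_multichoose (m : ℕ) :
    invSqrtCoeff m = Ring.multichoose (1 / 2 : ℝ) m := by
  induction m with
  | zero => simp [invSqrtCoeff_zero]
  | succ m ih =>
    apply mul_left_cancel₀ (by positivity : (2 * m + 2 : ℝ) ≠ 0)
    linear_combination invSqrtCoeff_succ m + (2 * m + 1) * ih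
      - (2 : ℝ) * Ring.succ_mul_multichoose_succ (1 / 2 : ℝ) m

lemma hasSum_invSqrtCoeff_mul_pow {x : ℝ} (hx : |x| < 1) :
    HasSum (fun m => invSqrtCoeff m * x ^ m) (1 / √(1 - x)) := by
  have h := (Real.one_div_one_sub_rpow_hasFPowerSeriesOnBall_zero (1 / 2)).hasSum
    (y := x) (by simpa [enorm_eq_nnnorm, ← NNReal.coe_lt_one] using hx)
  rw [Real.sqrt_eq_rpow]
  simpa [FormalMultilinearSeries.ofScalars_apply_eq, invSqrtCoeff_eq_multichoose,
    Ring.multichoose_eq, mul_comm] using h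

lemma summable_pow_mul_invSqrtCoeff_mul_pow (k : ℕ) {x : ℝ} (hx : |x| < 1) :
    Summable (fun m : ℕ => (m : ℝ) ^ k * invSqrtCoeff m * x ^ m) := by
  refine .of_norm_bounded (summable_pow_mul_geometric_of_norm_lt_one k (r := |x|) (by simpa))
    fun m => ?_
  simp only [norm_mul, norm_pow, Real.norm_eq_abs, abs_of_pos (invSqrtCoeff_pos m), Nat.abs_cast]
  gcongr
  exact mul_le_of_le_one_right (by positivity) (invSqrtCoeff_le_one m)

noncomputable def invSqrtMoment (k : ℕ) (x : ℝ) : ℝ :=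
  ∑' m : ℕ, (m : ℝ) ^ k * invSqrtCoeff m * x ^ m

section Moments

variable {x : ℝ}

lemma invSqrtMoment_zero (hx : |x| < 1) : invSqrtMoment 0 x = 1 / √(1 - x) := by
  simpa [invSqrtMoment] using (hasSum_invSqrtCoeff_mul_pow hx).tsum_eq

lemma tsum_quadratic_mul_invSqrtCoeff_mul_pow (hx : |x| < 1) (α β γ : ℝ) :
    ∑' m : ℕ, (α * m ^ 2 + β * m + γ) * invSqrtCoeff m * x ^ m
      = α * invSqrtMoment 2 x + β * invSqrtMoment 1 x + γ * invSqrtMoment 0 x := by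
  have h k := (summable_pow_mul_invSqrtCoeff_mul_pow k hx).hasSum
  simp only [invSqrtMoment]
  refine (tsum_congr fun m => ?_).trans
    ((((h 2).mul_left α).add ((h 1).mul_left β)).add ((h 0).mul_left γ)).tsum_eq
  ring

lemma invSqrtMoment_succ (hx : |x| < 1) (k : ℕ) :
    invSqrtMoment (k + 1) x
      = x * ∑' m : ℕ, ((m : ℝ) + 1) ^ k * (m + 1 / 2) * invSqrtCoeff m * x ^ m := by
  rw [invSqrtMoment, (summable_pow_mul_invSqrtCoeff_mul_pow (k + 1) hx).tsum_eq_zero_add,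
    ← tsum_mul_left]
  simp only [Nat.cast_zero, zero_pow k.succ_ne_zero, zero_mul, zero_add]
  refine tsum_congr fun m => ?_
  push_cast
  linear_combination ((m : ℝ) + 1) ^ k * x ^ (m + 1) / 2 * invSqrtCoeff_succ m

lemma invSqrtMoment_one (hx : |x| < 1) :
    2 * (1 - x) * invSqrtMoment 1 x = x * invSqrtMoment 0 x := by
  have e := invSqrtMoment_succ hx 0
  have hpoly (m : ℕ) : ((m : ℝ) + 1) ^ 0 * (m + 1 / 2) * invSqrtCoeff m * x ^ m
      = (0 * (m : ℝ) ^ 2 + 1 * m + 1 / 2) * invSqrtCoeff m * x ^ m := by ring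
  rw [tsum_congr hpoly, tsum_quadratic_mul_invSqrtCoeff_mul_pow hx] at e
  linear_combination 2 * e

lemma invSqrtMoment_two (hx : |x| < 1) :
    2 * (1 - x) * invSqrtMoment 2 x = x * (3 * invSqrtMoment 1 x + invSqrtMoment 0 x) := by
  have e := invSqrtMoment_succ hx 1
  have hpoly (m : ℕ) : ((m : ℝ) + 1) ^ 1 * (m + 1 / 2) * invSqrtCoeff m * x ^ m
      = (1 * (m : ℝ) ^ 2 + 3 / 2 * m + 1 / 2) * invSqrtCoeff m * x ^ m := by ring
  rw [tsum_congr hpoly, tsum_quadratic_mul_invSqrtCoeff_mul_pow hx] at e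
  linear_combination 2 * e

end Moments

lemma one_sub_tanh_sq (t : ℝ) : 1 - tanh t ^ 2 = 1 / cosh t ^ 2 := by
  have := cosh_sq_sub_sinh_sq t
  rw [tanh_eq_sinh_div_cosh]
  field_simp
  linarith

lemma abs_tanh_sq_lt_one (t : ℝ) : |tanh t ^ 2| < 1 := by
  rw [abs_of_nonneg (sq_nonneg _)]
  exact tanh_sq_lt_one t

lemma invSqrtMoment_zero_tanh_sq (t : ℝ) : invSqrtMoment 0 (tanh t ^ 2) = cosh t := by
  rw [invSqrtMoment_zero (abs_tanh_sq_lt_one t), one_sub_tanh_sq, sqrt_div' _ (sq_nonneg _),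
    sqrt_sq (cosh_pos t).le]
  simp

lemma invSqrtMoment_one_tanh_sq (t : ℝ) :
    invSqrtMoment 1 (tanh t ^ 2) = sinh t ^ 2 * cosh t / 2 := by
  have h := invSqrtMoment_one (abs_tanh_sq_lt_one t)
  rw [one_sub_tanh_sq, invSqrtMoment_zero_tanh_sq] at h
  rw [tanh_eq_sinh_div_cosh] at h ⊢
  have := (cosh_pos t).ne'
  field_simp at h ⊢
  linear_combination h

lemma invSqrtMoment_two_tanh_sq (t : ℝ) :
    invSqrtMoment 2 (tanh t ^ 2) = sinh t ^ 2 * cosh t * (3 * sinh t ^ 2 + 2) / 4 := by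
  have h := invSqrtMoment_two (abs_tanh_sq_lt_one t)
  rw [one_sub_tanh_sq, invSqrtMoment_one_tanh_sq, invSqrtMoment_zero_tanh_sq] at h
  rw [tanh_eq_sinh_div_cosh] at h ⊢
  have := (cosh_pos t).ne'
  have := cosh_sq_sub_sinh_sq t
  field_simp at h ⊢
  linear_combination h

lemma hasDerivAt_tanh_pow (n : ℕ) {t : ℝ} (ht : t ≠ 0) :
    HasDerivAt (fun t => tanh t ^ n) (n * tanh t ^ n / (sinh t * cosh t)) t := by
  have hc := (cosh_pos t).ne'
  have hs : sinh t ≠ 0 := sinh_ne_zero.2 ht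
  have htanh : HasDerivAt tanh (1 / cosh t ^ 2) t := by
    rw [show tanh = sinh / cosh from funext tanh_eq_sinh_div_cosh]
    refine ((hasDerivAt_sinh t).div (hasDerivAt_cosh t) hc).congr_deriv ?_
    field_simp
    linarith [cosh_sq_sub_sinh_sq t]
  refine (htanh.fun_pow n).congr_deriv ?_
  rcases n with _ | n
  · simp
  · rw [Nat.add_sub_cancel, tanh_eq_sinh_div_cosh, div_pow, div_pow]
    field_simp
    ring

noncomputable def squeezedVacuumProb (m : ℕ) (t : ℝ) : ℝ :=
  tanh t ^ (2 * m) / cosh t * invSqrtCoeff m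

lemma squeezedVacuumProb_pos (m : ℕ) {t : ℝ} (ht : t ≠ 0) : 0 < squeezedVacuumProb m t := by
  have htanh : tanh t ≠ 0 := by
    rw [tanh_eq_sinh_div_cosh]; exact div_ne_zero (sinh_ne_zero.2 ht) (cosh_pos t).ne'
  exact mul_pos (div_pos ((even_two_mul m).pow_pos htanh) (cosh_pos t)) (invSqrtCoeff_pos m)

lemma hasDerivAt_squeezedVacuumProb (m : ℕ) {t : ℝ} (ht : t ≠ 0) :
    HasDerivAt (squeezedVacuumProb m)
      (squeezedVacuumProb m t * ((2 * m - sinh t ^ 2) / (sinh t * cosh t))) t := by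
  have hc := (cosh_pos t).ne'
  have hs : sinh t ≠ 0 := sinh_ne_zero.2 ht
  refine (((hasDerivAt_tanh_pow (2 * m) ht).div (hasDerivAt_cosh t) hc).mul_const
    (invSqrtCoeff m)).congr_deriv ?_
  unfold squeezedVacuumProb
  field_simp
  push_cast
  ring

lemma sq_deriv_squeezedVacuumProb_div (m : ℕ) {t : ℝ} (ht : t ≠ 0) :
    deriv (squeezedVacuumProb m) t ^ 2 / squeezedVacuumProb m t
      = (4 / (sinh t ^ 2 * cosh t ^ 3) * m ^ 2 + (-4 / cosh t ^ 3) * m + sinh t ^ 2 / cosh t ^ 3)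
        * invSqrtCoeff m * (tanh t ^ 2) ^ m := by
  have hc := (cosh_pos t).ne'
  have hs : sinh t ≠ 0 := sinh_ne_zero.2 ht
  rw [(hasDerivAt_squeezedVacuumProb m ht).deriv, mul_pow, pow_two (squeezedVacuumProb m t),
    mul_assoc, mul_div_cancel_left₀ _ (squeezedVacuumProb_pos m ht).ne', squeezedVacuumProb,
    ← pow_mul]
  field_simp
  ring

/-- Fisher information of photon-number measurement on a squeezed vacuum:
with `p(2m; ξ) = tanh(ξ)^{2m}/cosh(ξ) · (2m)!/(4^m (m!)²)` (odd probabilities vanish),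
`∑ₘ (∂_ξ p(2m;ξ))² / p(2m;ξ) = 2` for all `ξ > 0`. -/
theorem stmt_12 (ξ : ℝ) (hξ : 0 < ξ) :
    let p : ℕ → ℝ → ℝ := fun m t =>
      Real.tanh t ^ (2 * m) / Real.cosh t *
        (((2 * m).factorial : ℝ) / ((4 : ℝ) ^ m * ((m.factorial : ℝ)) ^ 2))
    ∑' m : ℕ, (deriv (p m) ξ) ^ 2 / p m ξ = 2 := by
  show ∑' m : ℕ, deriv (squeezedVacuumProb m) ξ ^ 2 / squeezedVacuumProb m ξ = 2
  rw [tsum_congr fun m => sq_deriv_squeezedVacuumProb_div m hξ.ne',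
    tsum_quadratic_mul_invSqrtCoeff_mul_pow (abs_tanh_sq_lt_one ξ), invSqrtMoment_two_tanh_sq,
    invSqrtMoment_one_tanh_sq, invSqrtMoment_zero_tanh_sq]
  have hc := (cosh_pos ξ).ne'
  have hs := sinh_ne_zero.2 hξ.ne'
  field_simp
  linear_combination (-4 : ℝ) * cosh_sq_sub_sinh_sq ξ
end
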